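/- arXiv:math/0311405 — 3 statements merged into one kernel-verified Lean document; each statement's English description precedes it below -/
import Mathlib

section
/- For formal power series in q: ∏_{i≥1} (1 - q^i) = ∑_{n ∈ ℤ} (-1)^n q^{(3n²-n)/2} (Euler's pentagonal number theorem). -/
open PowerSeries Finset

/-- Pentagonal exponents: `ep k = k(3k-1)/2`, defined recursively. -/
def ep : ℕ → ℕ
  | 0 => 0
  | (k+1) => ep k + 3*k + 1

lemma two_ep (k : ℕ) : 2 * ep k + k = 3 * k * k := by
  induction k with
  | zero => simp [ep]
  | succ n ih => simp only [ep]; nlinarith [ih]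

lemma le_ep (k : ℕ) : k ≤ ep k := by
  induction k with
  | zero => simp
  | succ n ih => simp only [ep]; omega

/-- Truncated Euler series `W k`. -/
noncomputable def Wp (N k : ℕ) : ℤ⟦X⟧ :=
  ∑ n ∈ Finset.range (N+2), (X:ℤ⟦X⟧)^(k*n) * ∏ j ∈ Finset.range n, (1 - (X:ℤ⟦X⟧)^(k+j))

/-- Truncated auxiliary series `G k`. -/
noncomputable def Gp (N k : ℕ) : ℤ⟦X⟧ :=
  ∑ n ∈ Finset.range (N+2), (X:ℤ⟦X⟧)^(k*n) * ∏ j ∈ Finset.range n, (1 - (X:ℤ⟦X⟧)^(k+1+j))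

/-- Truncated pentagonal sum. -/
noncomputable def Sp (m : ℕ) : ℤ⟦X⟧ :=
  ∑ n ∈ Finset.Icc (-(m : ℤ)) (m : ℤ),
    (-1 : ℤ⟦X⟧) ^ n.natAbs * (PowerSeries.X : ℤ⟦X⟧) ^ ((3 * n ^ 2 - n) / 2).toNat

lemma lemA (N k : ℕ) (hk : 1 ≤ k) :
    (X:ℤ⟦X⟧)^(N+1) ∣ Wp N k - (1 + ((X:ℤ⟦X⟧)^k - X^(2*k)) * Gp N k) := by
  set Q : ℕ → ℤ⟦X⟧ := fun n => ∏ j ∈ Finset.range n, (1 - (X:ℤ⟦X⟧)^(k+1+j)) with hQ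
  have hp : ∀ n, ∏ j ∈ Finset.range (n+1), (1 - (X:ℤ⟦X⟧)^(k+j)) = (1 - X^k) * Q n := by
    intro n
    rw [Finset.prod_range_succ', add_zero, mul_comm, hQ]
    congr 1
    exact Finset.prod_congr rfl fun j _ => by rw [show k+(j+1) = k+1+j by omega]
  have hW : Wp N k = 1 + ∑ n ∈ Finset.range (N+1),
      ((X:ℤ⟦X⟧)^k - X^(2*k)) * (X^(k*n) * Q n) := by
    rw [Wp, Finset.sum_range_succ']
    have h0 : (X:ℤ⟦X⟧)^(k*0) * ∏ j ∈ Finset.range 0, (1 - (X:ℤ⟦X⟧)^(k+j)) = 1 := by simp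
    rw [h0, add_comm]
    congr 1
    refine Finset.sum_congr rfl fun n _ => ?_
    rw [hp n]; ring
  have hGs : Gp N k = (∑ n ∈ Finset.range (N+1), (X:ℤ⟦X⟧)^(k*n) * Q n)
      + X^(k*(N+1)) * Q (N+1) := by
    rw [Gp, Finset.sum_range_succ]
  have key : Wp N k - (1 + ((X:ℤ⟦X⟧)^k - X^(2*k)) * Gp N k)
      = -(((X:ℤ⟦X⟧)^k - X^(2*k)) * (X^(k*(N+1)) * Q (N+1))) := by
    rw [hW, hGs, mul_add, Finset.mul_sum]; ring
  rw [key]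
  have h1 : (X:ℤ⟦X⟧)^(N+1) ∣ X^(k*(N+1)) :=
    pow_dvd_pow _ (Nat.le_mul_of_pos_left _ hk)
  exact dvd_neg.mpr ((h1.mul_right _).mul_left _)

lemma lemB (N k : ℕ) (hk : 1 ≤ k) :
    (X:ℤ⟦X⟧)^(N+1) ∣ (1 - (X:ℤ⟦X⟧)^k) * Gp N k - (1 - X^(2*k+1) * Wp N (k+1)) := by
  set Q : ℕ → ℤ⟦X⟧ := fun n => ∏ j ∈ Finset.range n, (1 - (X:ℤ⟦X⟧)^(k+1+j)) with hQ
  have hGs : Gp N k = (∑ n ∈ Finset.range (N+1), (X:ℤ⟦X⟧)^(k*n) * Q n)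
      + X^(k*(N+1)) * Q (N+1) := by
    rw [Gp, Finset.sum_range_succ]
  have hWs : Wp N (k+1) = (∑ n ∈ Finset.range (N+1), (X:ℤ⟦X⟧)^((k+1)*n) * Q n)
      + X^((k+1)*(N+1)) * Q (N+1) := by
    rw [Wp, Finset.sum_range_succ]
  have hG : Gp N k = 1 + (X:ℤ⟦X⟧)^k * (∑ n ∈ Finset.range (N+1), (X:ℤ⟦X⟧)^(k*n) * Q n)
      - X^(2*k+1) * (∑ n ∈ Finset.range (N+1), (X:ℤ⟦X⟧)^((k+1)*n) * Q n) := by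
    rw [Gp, Finset.sum_range_succ']
    have hterm : ∀ n ∈ Finset.range (N+1),
        (X:ℤ⟦X⟧)^(k*(n+1)) * ∏ j ∈ Finset.range (n+1), (1 - (X:ℤ⟦X⟧)^(k+1+j))
        = (X:ℤ⟦X⟧)^k * ((X:ℤ⟦X⟧)^(k*n) * Q n) - X^(2*k+1) * ((X:ℤ⟦X⟧)^((k+1)*n) * Q n) := by
      intro n _
      rw [Finset.prod_range_succ, hQ]; ring
    rw [Finset.sum_congr rfl hterm, Finset.sum_sub_distrib, ← Finset.mul_sum, ← Finset.mul_sum]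
    simp only [hQ]
    ring
  have key : (1 - (X:ℤ⟦X⟧)^k) * Gp N k - (1 - X^(2*k+1) * Wp N (k+1))
      = -((X:ℤ⟦X⟧)^k * (X^(k*(N+1)) * Q (N+1))) + X^(2*k+1) * (X^((k+1)*(N+1)) * Q (N+1)) := by
    rw [hGs] at hG
    rw [hGs, hWs]
    linear_combination hG
  rw [key]
  have h1 : (X:ℤ⟦X⟧)^(N+1) ∣ X^(k*(N+1)) :=
    pow_dvd_pow _ (Nat.le_mul_of_pos_left _ hk)
  have h2 : (X:ℤ⟦X⟧)^(N+1) ∣ X^((k+1)*(N+1)) :=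
    pow_dvd_pow _ (Nat.le_mul_of_pos_left _ (by omega))
  exact dvd_add (dvd_neg.mpr ((h1.mul_right _).mul_left _)) ((h2.mul_right _).mul_left _)

lemma star (N k : ℕ) (hk : 1 ≤ k) :
    (X:ℤ⟦X⟧)^(N+1) ∣ Wp N k - (1 + (X:ℤ⟦X⟧)^k - X^(3*k+1) * Wp N (k+1)) := by
  have hA := lemA N k hk
  have hB := lemB N k hk
  have key : Wp N k - (1 + (X:ℤ⟦X⟧)^k - X^(3*k+1) * Wp N (k+1))
      = (Wp N k - (1 + ((X:ℤ⟦X⟧)^k - X^(2*k)) * Gp N k))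
        + (X:ℤ⟦X⟧)^k * ((1 - (X:ℤ⟦X⟧)^k) * Gp N k - (1 - X^(2*k+1) * Wp N (k+1))) := by
    ring
  rw [key]
  exact dvd_add hA (hB.mul_left _)

lemma Sp_zero : Sp 0 = 1 := by
  simp [Sp]

lemma Sp_succ (m : ℕ) : Sp (m+1)
    = Sp m + (-1:ℤ⟦X⟧)^(m+1) * ((X:ℤ⟦X⟧)^(ep (m+1)) + X^(ep (m+1) + (m+1))) := by
  have hset : Finset.Icc (-((m:ℤ)+1)) ((m:ℤ)+1)
      = insert ((m:ℤ)+1) (insert (-((m:ℤ)+1)) (Finset.Icc (-(m:ℤ)) (m:ℤ))) := by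
    ext n
    simp only [Finset.mem_Icc, Finset.mem_insert]
    omega
  have h2 := two_ep (m+1)
  have hcast : 2 * (ep (m+1) : ℤ) + ((m:ℤ)+1) = 3 * ((m:ℤ)+1) * ((m:ℤ)+1) := by
    exact_mod_cast congrArg (Nat.cast : ℕ → ℤ) h2
  have hepos : (3 * ((m:ℤ)+1) ^ 2 - ((m:ℤ)+1)) / 2 = (ep (m+1) : ℤ) := by
    have h : 3 * ((m:ℤ)+1) ^ 2 - ((m:ℤ)+1) = 2 * (ep (m+1) : ℤ) := by linear_combination -hcast
    rw [h, Int.mul_ediv_cancel_left _ two_ne_zero]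
  have heneg : (3 * (-((m:ℤ)+1)) ^ 2 - (-((m:ℤ)+1))) / 2 = ((ep (m+1) : ℤ) + ((m:ℤ)+1)) := by
    have h : 3 * (-((m:ℤ)+1)) ^ 2 - (-((m:ℤ)+1)) = 2 * ((ep (m+1) : ℤ) + ((m:ℤ)+1)) := by
      linear_combination -hcast
    rw [h, Int.mul_ediv_cancel_left _ two_ne_zero]
  have hm1 : ((m:ℤ)+1).natAbs = m + 1 := by omega
  have hm2 : (-((m:ℤ)+1)).natAbs = m + 1 := by omega
  have ht1 : ((3 * ((m:ℤ)+1) ^ 2 - ((m:ℤ)+1)) / 2).toNat = ep (m+1) := by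
    rw [hepos]; exact Int.toNat_natCast _
  have ht2 : ((3 * (-((m:ℤ)+1)) ^ 2 - (-((m:ℤ)+1))) / 2).toNat = ep (m+1) + (m+1) := by
    rw [heneg]; omega
  have hn1 : ((m:ℤ)+1) ∉ insert (-((m:ℤ)+1)) (Finset.Icc (-(m:ℤ)) (m:ℤ)) := by
    simp only [Finset.mem_insert, Finset.mem_Icc]; omega
  have hn2 : (-((m:ℤ)+1)) ∉ Finset.Icc (-(m:ℤ)) (m:ℤ) := by
    simp only [Finset.mem_Icc]; omega
  rw [Sp, show ((m+1 : ℕ) : ℤ) = (m:ℤ)+1 by push_cast; ring, hset,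
    Finset.sum_insert hn1, Finset.sum_insert hn2, hm1, hm2, ht1, ht2, ← Sp]
  ring

lemma unwind (N : ℕ) : ∀ m : ℕ,
    (X:ℤ⟦X⟧)^(N+1) ∣ (1 - X * Wp N 1)
      - (Sp m + (-1:ℤ⟦X⟧)^(m+1) * X^(ep (m+1)) * Wp N (m+1)) := by
  intro m
  induction m with
  | zero =>
    have h : Sp 0 + (-1:ℤ⟦X⟧)^(0+1) * X^(ep (0+1)) * Wp N (0+1) = 1 - X * Wp N 1 := by
      rw [Sp_zero, show ep 1 = 1 by rfl]
      ring
    rw [h, sub_self]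
    exact dvd_zero _
  | succ m ih =>
    have hstar := star N (m+1) (by omega)
    have key : (1 - X * Wp N 1)
        - (Sp (m+1) + (-1:ℤ⟦X⟧)^(m+2) * X^(ep (m+2)) * Wp N (m+2))
        = ((1 - X * Wp N 1) - (Sp m + (-1:ℤ⟦X⟧)^(m+1) * X^(ep (m+1)) * Wp N (m+1)))
          + (-1:ℤ⟦X⟧)^(m+1) * X^(ep (m+1))
            * (Wp N (m+1) - (1 + (X:ℤ⟦X⟧)^(m+1) - X^(3*(m+1)+1) * Wp N (m+2))) := by
      rw [Sp_succ, show ep (m+2) = ep (m+1) + (3*(m+1)+1) by simp [ep]; ring]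
      ring
    rw [key]
    exact dvd_add ih (hstar.mul_left _)

lemma prodTel : ∀ m : ℕ, ∏ i ∈ Finset.range m, (1 - (X:ℤ⟦X⟧)^(i+1))
    = 1 - ∑ n ∈ Finset.range m, (X:ℤ⟦X⟧)^(n+1) * ∏ i ∈ Finset.range n, (1 - (X:ℤ⟦X⟧)^(i+1)) := by
  intro m
  induction m with
  | zero => simp
  | succ m ih => rw [Finset.prod_range_succ, Finset.sum_range_succ, ih]; ring

lemma lemC (N : ℕ) : (X:ℤ⟦X⟧)^(N+1) ∣
    (∏ i ∈ Finset.range (N+1), (1 - (X:ℤ⟦X⟧)^(i+1))) - (1 - X * Wp N 1) := by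
  have hW : X * Wp N 1 = (∑ n ∈ Finset.range (N+1),
        (X:ℤ⟦X⟧)^(n+1) * ∏ i ∈ Finset.range n, (1 - (X:ℤ⟦X⟧)^(i+1)))
      + (X:ℤ⟦X⟧)^(N+1+1) * ∏ i ∈ Finset.range (N+1), (1 - (X:ℤ⟦X⟧)^(i+1)) := by
    rw [Wp, Finset.mul_sum, Finset.sum_range_succ]
    congr 1
    · refine Finset.sum_congr rfl fun n _ => ?_
      have hp : ∏ j ∈ Finset.range n, (1 - (X:ℤ⟦X⟧)^(1+j))
          = ∏ j ∈ Finset.range n, (1 - (X:ℤ⟦X⟧)^(j+1)) :=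
        Finset.prod_congr rfl fun j _ => by rw [add_comm]
      rw [hp]; ring
    · have hp : ∏ j ∈ Finset.range (N+1), (1 - (X:ℤ⟦X⟧)^(1+j))
          = ∏ j ∈ Finset.range (N+1), (1 - (X:ℤ⟦X⟧)^(j+1)) :=
        Finset.prod_congr rfl fun j _ => by rw [add_comm]
      rw [hp]; ring
  rw [prodTel (N+1), hW]
  have key : ∀ A t : ℤ⟦X⟧, (1 - A) - (1 - (A + t)) = t := by intros; ring
  rw [key]
  exact (pow_dvd_pow (X:ℤ⟦X⟧) (by omega)).mul_right _

/-- Euler's pentagonal number theorem, stated coefficientwise in `ℤ⟦q⟧`: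
for every `N`, the `N`-th coefficient of `∏_{i≥1} (1 - q^i)` (which only depends on the
factors with `i ≤ N+1`) equals the `N`-th coefficient of
`∑_{n ∈ ℤ} (-1)^n q^{(3n²-n)/2}` (only finitely many `n`, with `|n| ≤ N`, contribute). -/
theorem euler_pentagonal (N : ℕ) :
    PowerSeries.coeff N (∏ i ∈ Finset.range (N + 1), (1 - (PowerSeries.X : ℤ⟦X⟧) ^ (i + 1))) =
      PowerSeries.coeff N
        (∑ n ∈ Finset.Icc (-(N : ℤ)) (N : ℤ),
          (-1 : ℤ⟦X⟧) ^ n.natAbs * (PowerSeries.X : ℤ⟦X⟧) ^ ((3 * n ^ 2 - n) / 2).toNat) := by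
  have h1 := lemC N
  have h2 := unwind N N
  have h3 : (X:ℤ⟦X⟧)^(N+1) ∣ (-1:ℤ⟦X⟧)^(N+1) * X^(ep (N+1)) * Wp N (N+1) := by
    have h : (X:ℤ⟦X⟧)^(N+1) ∣ X^(ep (N+1)) := pow_dvd_pow _ (le_ep (N+1))
    exact (h.mul_left _).mul_right _
  have hd : (X:ℤ⟦X⟧)^(N+1) ∣
      (∏ i ∈ Finset.range (N+1), (1 - (X:ℤ⟦X⟧)^(i+1))) - Sp N := by
    have key : (∏ i ∈ Finset.range (N+1), (1 - (X:ℤ⟦X⟧)^(i+1))) - Sp N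
        = ((∏ i ∈ Finset.range (N+1), (1 - (X:ℤ⟦X⟧)^(i+1))) - (1 - X * Wp N 1))
          + ((1 - X * Wp N 1) - (Sp N + (-1:ℤ⟦X⟧)^(N+1) * X^(ep (N+1)) * Wp N (N+1)))
          + (-1:ℤ⟦X⟧)^(N+1) * X^(ep (N+1)) * Wp N (N+1) := by ring
    rw [key]
    exact dvd_add (dvd_add h1 h2) h3
  have hc := (PowerSeries.X_pow_dvd_iff.mp hd) N (Nat.lt_succ_self N)
  rw [map_sub] at hc
  have heq : PowerSeries.coeff N (∏ i ∈ Finset.range (N+1), (1 - (X:ℤ⟦X⟧)^(i+1)))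
      = PowerSeries.coeff N (Sp N) := by linarith
  exact heq
end

section
/- For formal power series in q: (∏_{i≥1} (1 - q^i))³ = ∑_{m=0}^∞ (-1)^m (2m+1) q^{m(m+1)/2} (Jacobi's identity for the cube of the Euler product). -/
open PowerSeries Finset
noncomputable section JacobiAux2
def Tn : ℕ → ℕ
  | 0 => 0
  | (a+1) => Tn a + a
lemma Tn_succ (a : ℕ) : Tn (a+1) = Tn a + a := rfl
def B : ℕ → ℕ → ℤ⟦X⟧
  | 0, 0 => 1
  | 0, _+1 => 0
  | _+1, 0 => 1
  | m+1, k+1 => B m k + (PowerSeries.X : ℤ⟦X⟧)^(k+1) * B m (k+1)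
lemma B_zero (m : ℕ) : B m 0 = 1 := by cases m <;> rfl
lemma B_succ (m k : ℕ) : B (m+1) (k+1) = B m k + (PowerSeries.X : ℤ⟦X⟧)^(k+1) * B m (k+1) := rfl
lemma B_eq_zero : ∀ m k : ℕ, m < k → B m k = 0 := by
  intro m
  induction m with
  | zero => intro k hk; cases k with
    | zero => omega
    | succ k => rfl
  | succ m ih =>
    intro k hk
    cases k with
    | zero => omega
    | succ k =>
      rw [B_succ, ih k (by omega), ih (k+1) (by omega)]
      simp

abbrev S := Polynomial ℤ⟦X⟧
local notation "Cp" => (Polynomial.C : ℤ⟦X⟧ →+* S)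
local notation "q" => (PowerSeries.X : ℤ⟦X⟧)

theorem qbinom : ∀ (M : ℕ) (u v : S),
    ∏ j ∈ range M, (u - Cp (q^j) * v)
      = ∑ k ∈ range (M+1), (-1)^k * Cp (B M k * q^(Tn k)) * u^(M-k) * v^k := by
  intro M
  induction M with
  | zero => intro u v; simp [B_zero, Tn]
  | succ M ih =>
    intro u v
    have h1 : ∏ j ∈ range (M+1), (u - Cp (q^j) * v)
        = (∏ j ∈ range M, (u - Cp (q^j) * (Cp q * v))) * (u - v) := by
      rw [Finset.prod_range_succ']
      congr 1
      · apply Finset.prod_congr rfl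
        intro j _
        rw [pow_succ, map_mul]
        ring
      · simp
    rw [h1, ih]
    set t : ℕ → S := fun k => (-1)^k * Cp (B M k * q^(Tn (k+1))) with ht
    set s : ℕ → S := fun k => (-1)^k * Cp (B (M+1) k * q^(Tn k)) with hs
    have e1 : (∑ k ∈ range (M+1), (-1:S)^k * Cp (B M k * q^(Tn k)) * u^(M-k) * (Cp q * v)^k)
        = ∑ k ∈ range (M+1), t k * u^(M-k) * v^k := by
      refine Finset.sum_congr rfl fun k _ => ?_
      rw [ht]
      simp only [Tn_succ, pow_add, map_mul, mul_pow, map_pow]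
      ring
    rw [e1]
    have expand : (∑ k ∈ range (M+1), t k * u^(M-k) * v^k) * (u - v)
        = (∑ k ∈ range (M+1), t k * (u^(M-k) * u) * v^k)
          - ∑ k ∈ range (M+1), t k * u^(M-k) * v^(k+1) := by
      rw [mul_sub, Finset.sum_mul, Finset.sum_mul]
      exact congrArg₂ (· - ·) (Finset.sum_congr rfl fun k _ => by ring) (Finset.sum_congr rfl fun k _ => by ring)
    rw [expand]
    have h0t : t 0 = 1 := by simp [ht, B_zero]; rfl
    have eF : (∑ k ∈ range (M+1), t k * (u^(M-k) * u) * v^k)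
        = (∑ k ∈ range (M+1), t (k+1) * u^(M-k) * v^(k+1)) + u^(M+1) := by
      rw [Finset.sum_range_succ' (fun k => t k * (u^(M-k) * u) * v^k) M,
        Finset.sum_range_succ (fun k => t (k+1) * u^(M-k) * v^(k+1)) M]
      have hlast : t (M+1) * u^(M-M) * v^(M+1) = 0 := by
        simp [ht, B_eq_zero M (M+1) (by omega)]
      rw [hlast, add_zero]
      refine congrArg₂ (· + ·) ?_ ?_
      · refine Finset.sum_congr rfl fun k hk => ?_
        simp only [mem_range] at hk
        have : u^(M-(k+1)) * u = u^(M-k) := by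
          rw [← pow_succ]; congr 1; omega
        rw [this]
      · rw [h0t]; simp [pow_succ]
    rw [eF]
    rw [show (∑ k ∈ range (M+1+1), (-1:S)^k * Cp (B (M+1) k * q^(Tn k)) * u^(M+1-k) * v^k)
        = ∑ k ∈ range (M+1+1), s k * u^(M+1-k) * v^k from rfl]
    rw [Finset.sum_range_succ' (fun k => s k * u^(M+1-k) * v^k) (M+1)]
    have h0s : s 0 * u^(M+1-0) * v^0 = u^(M+1) := by
      simp [hs, B_zero, show Tn 0 = 0 from rfl]
    rw [h0s]
    have eMain : ∀ k, t (k+1) - t k = s (k+1) := by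
      intro k
      simp only [ht, hs, B_succ, Tn_succ, pow_add, pow_succ, map_mul, map_add]
      ring
    have : (∑ k ∈ range (M+1), t (k+1) * u^(M-k) * v^(k+1))
          - (∑ k ∈ range (M+1), t k * u^(M-k) * v^(k+1))
        = ∑ k ∈ range (M+1), s (k+1) * u^(M+1-(k+1)) * v^(k+1) := by
      rw [← Finset.sum_sub_distrib]
      refine Finset.sum_congr rfl fun k hk => ?_
      rw [show M+1-(k+1) = M-k from by omega, ← eMain k]
      ring
    rw [← this]
    ring


/-- The key ratio identity for Gaussian binomials. -/
lemma B_ratio : ∀ m k : ℕ, k < m →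
    (1 - q^(k+1)) * B m (k+1) = (1 - q^(m-k)) * B m k := by
  intro m
  induction m with
  | zero => intro k hk; omega
  | succ m ih =>
    intro k hk
    cases k with
    | zero =>
      simp only [B_succ, B_zero, Nat.sub_zero]
      cases m with
      | zero => simp [B_eq_zero 0 1 (by omega), B_zero]
      | succ m' =>
        have h := ih 0 (by omega)
        rw [B_zero, Nat.sub_zero] at h
        linear_combination (q^(0+1) : ℤ⟦X⟧) * h
    | succ k =>
      rw [B_succ, B_succ]
      rcases Nat.lt_or_ge (k+1) m with hlt | hge
      · -- case k+1 < m
        obtain ⟨d, hd⟩ : ∃ d, m - (k+1) = d := ⟨_, rfl⟩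
        have h1 := ih (k+1) hlt
        have h2 := ih k (by omega)
        rw [hd] at h1
        rw [show m - k = d + 1 from by omega] at h2
        rw [show m + 1 - (k+1) = d + 1 from by omega]
        linear_combination (q^(k+1+1) : ℤ⟦X⟧) * h1 + h2
      · -- case k+1 = m
        have hem : m = k + 1 := by omega
        subst hem
        have h2 := ih k (by omega)
        rw [show k + 1 - k = 1 from by omega] at h2
        rw [show k + 1 + 1 - (k+1) = 1 from by omega,
          B_eq_zero (k+1) (k+1+1) (by omega)]
        linear_combination h2

/-- Telescoping: `∏_{j=1}^{r} (1-q^j) * B m r = ∏_{j=m-r+1}^{m} (1-q^j)`. -/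
lemma B_teles (m : ℕ) : ∀ r : ℕ, r ≤ m →
    (∏ k ∈ range r, (1 - q^(k+1))) * B m r = ∏ k ∈ range r, (1 - q^(m-k)) := by
  intro r
  induction r with
  | zero => intro _; simp [B_zero]
  | succ r ih =>
    intro hr
    rw [Finset.prod_range_succ, Finset.prod_range_succ, ← ih (by omega)]
    linear_combination (∏ k ∈ range r, (1 - (q:ℤ⟦X⟧)^(k+1))) * B_ratio m r (by omega)

/-- One step of the congruence window. -/
lemma B_step_dvd (m k c : ℕ) (hk : k < m) (h1 : c ≤ k + 1) (h2 : c ≤ m - k) :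
    (q^c : ℤ⟦X⟧) ∣ B m (k+1) - B m k := by
  have h := B_ratio m k hk
  have e : B m (k+1) - B m k = q^(k+1) * B m (k+1) - q^(m-k) * B m k := by
    linear_combination h
  rw [e]
  exact dvd_sub ((pow_dvd_pow q h1).mul_right _) ((pow_dvd_pow q h2).mul_right _)

/-- Chain of steps. -/
lemma B_chain_dvd (m c : ℕ) : ∀ (i a : ℕ), c ≤ a + 1 → a + i + c ≤ m →
    (q^c : ℤ⟦X⟧) ∣ B m (a + i) - B m a := by
  intro i
  induction i with
  | zero => intro a _ _; simp
  | succ i ih =>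
    intro a ha hm
    have step : (q^c : ℤ⟦X⟧) ∣ B m (a + i + 1) - B m (a + i) :=
      B_step_dvd m (a + i) c (by omega) (by omega) (by omega)
    have := dvd_add step (ih a (by omega) (by omega))
    simpa [show a + (i+1) = a + i + 1 from by omega] using this


lemma Tn_eq_sum (n : ℕ) : Tn n = ∑ j ∈ range n, j := by
  induction n with
  | zero => rfl
  | succ n ih => rw [Tn_succ, Finset.sum_range_succ, ih]

lemma neg_one_pow_sub (a b : ℕ) (h : b ≤ 2*a) : ((-1 : S))^(2*a - b) = (-1)^b := by
  have h1 : ((-1:S))^(2*a-b) * (-1)^b = 1 := by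
    rw [← pow_add, show 2*a-b+b = 2*a from by omega, pow_mul]; norm_num
  have h2 : ((-1:S))^b * (-1)^b = 1 := by
    rw [← pow_add, ← two_mul, pow_mul]; norm_num
  calc ((-1:S))^(2*a-b) = (-1)^(2*a-b) * ((-1)^b * (-1)^b) := by rw [h2, mul_one]
    _ = ((-1)^(2*a-b) * (-1)^b) * (-1)^b := by ring
    _ = (-1)^b := by rw [h1, one_mul]

/-- Finite Jacobi triple product, shifted form. -/
lemma jtp (n : ℕ) (hn : 0 < n) :
    Cp (q^(Tn n + n*n)) *
      ((∏ i ∈ range n, (Cp (q^(i+1)) * Polynomial.X - 1)) *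
        (∏ j ∈ range n, (Polynomial.X - Cp (q^j))))
    = ∑ s ∈ range (2*n+1),
        (-1)^s * Cp (B (2*n) (2*n - s) * q^(Tn (2*n - s) + n*s)) * Polynomial.X^s := by
  have h := qbinom (2*n) (Cp (q^n) * Polynomial.X) 1
  -- LHS of qbinom
  have hL : ∏ j ∈ range (2*n), (Cp ((q:ℤ⟦X⟧)^n) * Polynomial.X - Cp (q^j) * 1)
      = Cp (q^(Tn n + n*n)) *
        ((∏ i ∈ range n, (Cp (q^(i+1)) * Polynomial.X - 1)) *
          (∏ j ∈ range n, (Polynomial.X - Cp (q^j)))) := by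
    rw [show 2*n = n + n from by omega, Finset.prod_range_add]
    have e1 : ∏ j ∈ range n, (Cp ((q:ℤ⟦X⟧)^n) * Polynomial.X - Cp (q^j) * 1)
        = Cp (q^(Tn n)) * ∏ i ∈ range n, (Cp (q^(i+1)) * Polynomial.X - 1) := by
      have step : ∀ j ∈ range n, (Cp ((q:ℤ⟦X⟧)^n) * Polynomial.X - Cp (q^j) * 1)
          = Cp (q^j) * (Cp (q^(n-1-j+1)) * Polynomial.X - 1) := by
        intro j hj
        simp only [mem_range] at hj
        rw [mul_sub, mul_one, ← mul_assoc, ← map_mul, ← pow_add,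
          show j + (n-1-j+1) = n from by omega]
      rw [Finset.prod_congr rfl step, Finset.prod_mul_distrib, ← map_prod,
        Finset.prod_pow_eq_pow_sum, ← Tn_eq_sum,
        Finset.prod_range_reflect (fun i => Cp ((q:ℤ⟦X⟧)^(i+1)) * Polynomial.X - 1) n]
    have e2 : ∏ j ∈ range n, (Cp ((q:ℤ⟦X⟧)^n) * Polynomial.X - Cp (q^(n+j)) * 1)
        = Cp (q^(n*n)) * ∏ j ∈ range n, (Polynomial.X - Cp (q^j)) := by
      have step : ∀ j ∈ range n, (Cp ((q:ℤ⟦X⟧)^n) * Polynomial.X - Cp (q^(n+j)) * 1)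
          = Cp (q^n) * (Polynomial.X - Cp (q^j)) := by
        intro j _
        rw [mul_sub, mul_one, ← map_mul, ← pow_add]
      rw [Finset.prod_congr rfl step, Finset.prod_mul_distrib, Finset.prod_const,
        Finset.card_range, ← map_pow, ← pow_mul]
    rw [e1, e2, pow_add, map_mul]
    ring
  rw [hL] at h
  rw [h]
  -- RHS of qbinom : reindex
  rw [← Finset.sum_range_reflect
    (fun s => (-1 : S)^s * Cp (B (2*n) (2*n - s) * q^(Tn (2*n - s) + n*s)) * Polynomial.X^s)
    (2*n+1)]
  refine Finset.sum_congr rfl fun k hk => ?_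
  simp only [mem_range] at hk
  rw [show 2*n + 1 - 1 - k = 2*n - k from by omega]
  rw [show 2*n - (2*n - k) = k from by omega]
  rw [neg_one_pow_sub n k (by omega)]
  rw [mul_pow, ← map_pow, ← pow_mul, one_pow, mul_one]
  rw [show n * (2*n - k) = (2*n - k)*n from Nat.mul_comm _ _]
  simp only [pow_add, map_mul]
  ring


lemma two_Tn' (a : ℕ) : 2 * Tn (a+1) = a * (a+1) := by
  induction a with
  | zero => rfl
  | succ b ih => rw [Tn_succ, Nat.mul_add, ih]; ring

lemma le_Tn_succ (m : ℕ) : m ≤ Tn (m+1) := by rw [Tn_succ]; omega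

lemma Tn_eq_div (m : ℕ) : m * (m + 1) / 2 = Tn (m+1) := by
  have h := two_Tn' m
  omega

lemma exp1 (n m : ℕ) (h : m < n) :
    Tn (n-m) + n*(n+m) = Tn n + n*n + Tn (m+1) := by
  obtain ⟨d, rfl⟩ : ∃ d, n = m + d + 1 := ⟨n - m - 1, by omega⟩
  rw [show m + d + 1 - m = d + 1 from by omega]
  apply Nat.eq_of_mul_eq_mul_left (show 0 < 2 from by norm_num)
  have e1 := two_Tn' d
  have e2 := two_Tn' (m+d)
  have e3 := two_Tn' m
  rw [show m + d + 1 = (m + d) + 1 from by omega]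
  zify at e1 e2 e3 ⊢
  linear_combination e1 - e2 - e3

lemma exp2 (n m : ℕ) (h : m < n) :
    Tn (n+1+m) + n*(n-1-m) = Tn n + n*n + Tn (m+1) := by
  obtain ⟨d, rfl⟩ : ∃ d, n = m + d + 1 := ⟨n - m - 1, by omega⟩
  rw [show m + d + 1 - 1 - m = d from by omega]
  apply Nat.eq_of_mul_eq_mul_left (show 0 < 2 from by norm_num)
  have e2 := two_Tn' (m+d)
  have e3 := two_Tn' m
  have e4 := two_Tn' (2*m + d + 1)
  rw [show m + d + 1 + 1 + m = (2*m + d + 1) + 1 from by omega,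
    show m + d + 1 = (m + d) + 1 from by omega]
  zify at e2 e3 e4 ⊢
  linear_combination e4 - e2 - e3

lemma neg_one_pow_pair (n m : ℕ) (h : m < n) : ((-1:S))^(n-1-m) = -(-1 : S)^(n+m) := by
  have h1 : ((-1:S))^(n+m) = (-1)^(n-1-m) * (-1)^(2*m+1) := by
    rw [← pow_add]; congr 1; omega
  have h2 : ((-1:S))^(2*m+1) = -1 := by
    rw [pow_succ, pow_mul]; norm_num
  rw [h1, h2]; ring


/-- Replace all Gaussian binomials by the central one, modulo `q^(E+N+1)`. -/
lemma key_dvd (N n : ℕ) (hn : n = 2*N+2) :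
    Cp ((q:ℤ⟦X⟧)^(Tn n + n*n + (N+1))) ∣
      (∑ s ∈ range (2*n+1),
          (-1)^s * Cp (B (2*n) (2*n - s) * q^(Tn (2*n - s) + n*s)) * (Polynomial.X:S)^s)
        - Cp (q^(Tn n + n*n)) * (Cp (B (2*n) n) *
            ∑ m ∈ range n, (-1)^(n+m) * Cp (q^(Tn (m+1))) *
              ((Polynomial.X:S)^(n+m) - (Polynomial.X:S)^(n-1-m))) := by
  set E := Tn n + n*n with hE
  set g : ℕ → S := fun s =>
    (-1)^s * Cp (B (2*n) (2*n - s) * q^(Tn (2*n - s) + n*s)) * (Polynomial.X:S)^s with hg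
  -- split the sum
  have hsplit : (∑ s ∈ range (2*n+1), g s)
      = ((∑ m ∈ range n, g (n-1-m)) + (∑ m ∈ range n, g (n+m))) + g (2*n) := by
    rw [Finset.sum_range_succ, show 2*n = n + n from by omega, Finset.sum_range_add,
      ← Finset.sum_range_reflect (fun s => g s) n]
  rw [hsplit]
  -- expand the W side
  have hW : Cp ((q:ℤ⟦X⟧)^E) * (Cp (B (2*n) n) *
        ∑ m ∈ range n, (-1)^(n+m) * Cp (q^(Tn (m+1))) *
          ((Polynomial.X:S)^(n+m) - (Polynomial.X:S)^(n-1-m)))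
      = (∑ m ∈ range n,
          (-1)^(n+m) * Cp (B (2*n) n * q^(E + Tn (m+1))) * (Polynomial.X:S)^(n+m))
        - ∑ m ∈ range n,
          (-1)^(n+m) * Cp (B (2*n) n * q^(E + Tn (m+1))) * (Polynomial.X:S)^(n-1-m) := by
    rw [Finset.mul_sum, Finset.mul_sum, ← Finset.sum_sub_distrib]
    refine Finset.sum_congr rfl fun m hm => ?_
    simp only [pow_add, map_mul]
    ring
  rw [hW]
  have goal_eq :
      (((∑ m ∈ range n, g (n-1-m)) + (∑ m ∈ range n, g (n+m))) + g (2*n))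
        - ((∑ m ∈ range n,
            (-1)^(n+m) * Cp (B (2*n) n * q^(E + Tn (m+1))) * (Polynomial.X:S)^(n+m))
          - ∑ m ∈ range n,
            (-1)^(n+m) * Cp (B (2*n) n * q^(E + Tn (m+1))) * (Polynomial.X:S)^(n-1-m))
      = ((∑ m ∈ range n, (g (n+m)
            - (-1)^(n+m) * Cp (B (2*n) n * q^(E + Tn (m+1))) * (Polynomial.X:S)^(n+m)))
        + (∑ m ∈ range n, (g (n-1-m)
            + (-1)^(n+m) * Cp (B (2*n) n * q^(E + Tn (m+1))) * (Polynomial.X:S)^(n-1-m))))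
        + g (2*n) := by
    rw [Finset.sum_sub_distrib, Finset.sum_add_distrib]
    ring
  rw [goal_eq]
  -- divisibility of the three pieces
  refine dvd_add (dvd_add (Finset.dvd_sum fun m hm => ?_) (Finset.dvd_sum fun m hm => ?_)) ?_
  · -- the z^(n+m) terms
    simp only [mem_range] at hm
    have h2 : 2*n - (n+m) = n - m := by omega
    have hexp : Tn (n - m) + n*(n+m) = E + Tn (m+1) := exp1 n m hm
    have hterm : g (n+m)
        - (-1)^(n+m) * Cp (B (2*n) n * q^(E + Tn (m+1))) * (Polynomial.X:S)^(n+m)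
        = (-1)^(n+m) * Cp ((B (2*n) (n-m) - B (2*n) n) * q^(E + Tn (m+1)))
            * (Polynomial.X:S)^(n+m) := by
      rw [hg]
      simp only [h2, hexp, sub_mul, map_sub]
      ring
    rw [hterm]
    have hinner : ((q:ℤ⟦X⟧)^(E + (N+1))) ∣ (B (2*n) (n-m) - B (2*n) n) * q^(E + Tn (m+1)) := by
      rcases Nat.lt_or_ge N (Tn (m+1)) with hT | hT
      · exact Dvd.dvd.mul_left (pow_dvd_pow _ (by omega)) _
      · have hm' : m ≤ N := le_trans (le_Tn_succ m) hT
        have hch := B_chain_dvd (2*n) (N+1) m (n-m) (by omega) (by omega)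
        rw [show n - m + m = n from by omega] at hch
        have : ((q:ℤ⟦X⟧)^(N+1)) ∣ B (2*n) (n-m) - B (2*n) n := by
          have h' := dvd_neg.mpr hch
          rwa [neg_sub] at h'
        calc ((q:ℤ⟦X⟧)^(E + (N+1))) = q^(N+1) * q^E := by rw [← pow_add]; ring_nf
          _ ∣ (B (2*n) (n-m) - B (2*n) n) * q^(E + Tn (m+1)) :=
            mul_dvd_mul this (pow_dvd_pow _ (by omega))
    rw [show Tn n + n*n + (N+1) = E + (N+1) from rfl]
    exact Dvd.dvd.mul_right (Dvd.dvd.mul_left (map_dvd Cp hinner) _) _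
  · -- the z^(n-1-m) terms
    simp only [mem_range] at hm
    have h2 : 2*n - (n-1-m) = n+1+m := by omega
    have hexp : Tn (n+1+m) + n*(n-1-m) = E + Tn (m+1) := exp2 n m hm
    have hsgn := neg_one_pow_pair n m hm
    have hterm : g (n-1-m)
        + (-1)^(n+m) * Cp (B (2*n) n * q^(E + Tn (m+1))) * (Polynomial.X:S)^(n-1-m)
        = -((-1)^(n+m) * Cp ((B (2*n) (n+1+m) - B (2*n) n) * q^(E + Tn (m+1)))
            * (Polynomial.X:S)^(n-1-m)) := by
      rw [hg]
      simp only [h2, hexp, hsgn, sub_mul, map_sub]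
      ring
    rw [hterm]
    have hinner : ((q:ℤ⟦X⟧)^(E + (N+1))) ∣ (B (2*n) (n+1+m) - B (2*n) n) * q^(E + Tn (m+1)) := by
      rcases Nat.lt_or_ge N (Tn (m+1)) with hT | hT
      · exact Dvd.dvd.mul_left (pow_dvd_pow _ (by omega)) _
      · have hm' : m ≤ N := le_trans (le_Tn_succ m) hT
        have hch := B_chain_dvd (2*n) (N+1) (m+1) n (by omega) (by omega)
        rw [show n + (m+1) = n+1+m from by omega] at hch
        calc ((q:ℤ⟦X⟧)^(E + (N+1))) = q^(N+1) * q^E := by rw [← pow_add]; ring_nf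
          _ ∣ (B (2*n) (n+1+m) - B (2*n) n) * q^(E + Tn (m+1)) :=
            mul_dvd_mul hch (pow_dvd_pow _ (by omega))
    rw [show Tn n + n*n + (N+1) = E + (N+1) from rfl]
    exact dvd_neg.mpr (Dvd.dvd.mul_right (Dvd.dvd.mul_left (map_dvd Cp hinner) _) _)
  · -- the g (2n) term
    rw [hg]
    simp only [Nat.sub_self]
    rw [B_zero, one_mul, show Tn 0 = 0 from rfl, Nat.zero_add]
    have hle : Tn n + n*n + (N+1) ≤ n * (2*n) := by
      have h2T := two_Tn' (2*N+1)
      have hTn : Tn n = Tn ((2*N+1)+1) := by rw [hn]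
      nlinarith [h2T, hTn]
    exact Dvd.dvd.mul_right (Dvd.dvd.mul_left (map_dvd Cp (pow_dvd_pow _ hle)) _) _


/-- After cancelling `C (q^E)`. -/
lemma cancelE (N n : ℕ) (hn : n = 2*N+2) :
    Cp ((q:ℤ⟦X⟧)^(N+1)) ∣
      (∏ i ∈ range n, (Cp (q^(i+1)) * Polynomial.X - 1)) *
        (∏ j ∈ range n, (Polynomial.X - Cp (q^j)))
      - Cp (B (2*n) n) * ∑ m ∈ range n, (-1)^(n+m) * Cp (q^(Tn (m+1))) *
          ((Polynomial.X:S)^(n+m) - (Polynomial.X:S)^(n-1-m)) := by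
  obtain ⟨Y, hY⟩ := key_dvd N n hn
  refine ⟨Y, ?_⟩
  have hCne : (Cp ((q:ℤ⟦X⟧)^(Tn n + n*n)) : S) ≠ 0 := by
    rw [Ne, Polynomial.C_eq_zero]
    exact pow_ne_zero _ PowerSeries.X_ne_zero
  apply mul_left_cancel₀ hCne
  rw [mul_sub, jtp n (by omega), hY]
  rw [show Tn n + n*n + (N+1) = (Tn n + n*n) + (N+1) from rfl, pow_add, map_mul]
  ring

/-- Coefficientwise descent: if `(X - 1) * D = C c * Y` then `c` divides every
coefficient of `D`. -/
lemma descent (c : ℤ⟦X⟧) (D Y : S)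
    (h : (Polynomial.X - 1) * D = Polynomial.C c * Y) : ∀ k, c ∣ D.coeff k := by
  have hdvd : ∀ k, c ∣ D.coeff k - D.coeff (k+1) := by
    intro k
    have hco : ((Polynomial.X - 1) * D).coeff (k+1) = D.coeff k - D.coeff (k+1) := by
      rw [sub_mul, one_mul, Polynomial.coeff_sub, Polynomial.coeff_X_mul]
    rw [← hco, h, Polynomial.coeff_C_mul]
    exact Dvd.intro _ rfl
  have main : ∀ i k, k + i = D.natDegree + 1 → c ∣ D.coeff k := by
    intro i
    induction i with
    | zero =>
      intro k hk
      rw [Polynomial.coeff_eq_zero_of_natDegree_lt (by omega)]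
      exact dvd_zero c
    | succ i ih =>
      intro k hk
      have h1 := ih (k+1) (by omega)
      have h2 := hdvd k
      have h3 := dvd_add h2 h1
      rwa [sub_add_cancel] at h3
  intro k
  rcases le_or_gt k (D.natDegree + 1) with hk | hk
  · exact main (D.natDegree + 1 - k) k (by omega)
  · rw [Polynomial.coeff_eq_zero_of_natDegree_lt (by omega)]
    exact dvd_zero c

lemma dvd_eval_one (c : ℤ⟦X⟧) (D : S) (h : ∀ k, c ∣ D.coeff k) : c ∣ D.eval 1 := by
  rw [Polynomial.eval_eq_sum_range]
  exact Finset.dvd_sum fun i _ => by rw [one_pow, mul_one]; exact h i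


lemma neg_one_pow_add_self (n m : ℕ) : ((-1:ℤ⟦X⟧))^n * (-1)^(n+m) = (-1)^m := by
  rw [← pow_add, show n+(n+m) = 2*n+m from by omega, pow_add, pow_mul]
  norm_num

lemma one_sub_prod_dvd (c : ℕ) : ∀ (r : ℕ) (e : ℕ → ℕ), (∀ k, k < r → c ≤ e k) →
    ((q:ℤ⟦X⟧)^c) ∣ 1 - ∏ k ∈ range r, (1 - q^(e k)) := by
  intro r
  induction r with
  | zero => intro e _; simp
  | succ r ih =>
    intro e he
    have key : 1 - ∏ k ∈ range (r+1), (1 - (q:ℤ⟦X⟧)^(e k))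
        = (1 - ∏ k ∈ range r, (1 - q^(e k)))
          + (∏ k ∈ range r, (1 - q^(e k))) * q^(e r) := by
      rw [Finset.prod_range_succ]; ring
    rw [key]
    exact dvd_add (ih e fun k hk => he k (by omega))
      (Dvd.dvd.mul_left (pow_dvd_pow _ (he r (by omega))) _)

/-- Jacobi's identity modulo `q^(N+1)`. -/
lemma euler_cube_mod (N : ℕ) :
    ((q:ℤ⟦X⟧)^(N+1)) ∣
      (∏ i ∈ range (2*N+2), (1 - q^(i+1)))^3
        - ∑ m ∈ range (2*N+2), (-1)^m * (2*(m:ℤ⟦X⟧)+1) * q^(Tn (m+1)) := by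
  set n := 2*N+2 with hn
  set A : S := ∏ i ∈ range n, (Cp ((q:ℤ⟦X⟧)^(i+1)) * Polynomial.X - 1) with hA
  set Bz' : S := ∏ j ∈ range (2*N+1), (Polynomial.X - Cp ((q:ℤ⟦X⟧)^(j+1))) with hBz'
  set W' : S := Cp (B (2*n) n) * ∑ m ∈ range n, (-1)^(n+m) * Cp ((q:ℤ⟦X⟧)^(Tn (m+1))) *
      ((Polynomial.X:S)^(n-1-m) * ∑ i ∈ range (2*m+1), (Polynomial.X:S)^i) with hW'
  -- step 1: (X - 1) * (A * Bz' - W') = C (q^(N+1)) * Y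
  obtain ⟨Y, hY⟩ := cancelE N n rfl
  have hfact : (Polynomial.X - 1) * (A * Bz' - W') = Cp ((q:ℤ⟦X⟧)^(N+1)) * Y := by
    rw [← hY]
    have hBz : (∏ j ∈ range n, ((Polynomial.X:S) - Cp ((q:ℤ⟦X⟧)^j)))
        = Bz' * (Polynomial.X - 1) := by
      rw [hn, show 2*N+2 = (2*N+1)+1 from rfl,
        Finset.prod_range_succ' (fun j => (Polynomial.X:S) - Cp ((q:ℤ⟦X⟧)^j)) (2*N+1)]
      simp [hBz']
    have hWt : ∀ m ∈ range n, (-1:S)^(n+m) * Cp ((q:ℤ⟦X⟧)^(Tn (m+1))) *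
          ((Polynomial.X:S)^(n+m) - (Polynomial.X:S)^(n-1-m))
        = (Polynomial.X - 1) * ((-1)^(n+m) * Cp ((q:ℤ⟦X⟧)^(Tn (m+1))) *
            ((Polynomial.X:S)^(n-1-m) * ∑ i ∈ range (2*m+1), (Polynomial.X:S)^i)) := by
      intro m hm
      simp only [mem_range] at hm
      have hg := geom_sum_mul (Polynomial.X : S) (2*m+1)
      have hz : (Polynomial.X:S)^(n+m) - (Polynomial.X:S)^(n-1-m)
          = (Polynomial.X - 1) * ((Polynomial.X:S)^(n-1-m) * ∑ i ∈ range (2*m+1), (Polynomial.X:S)^i) := by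
        calc (Polynomial.X:S)^(n+m) - (Polynomial.X:S)^(n-1-m)
            = (Polynomial.X:S)^(n-1-m) * ((Polynomial.X:S)^(2*m+1) - 1) := by
              rw [mul_sub, mul_one, ← pow_add, show n-1-m + (2*m+1) = n+m from by omega]
          _ = (Polynomial.X:S)^(n-1-m) * ((∑ i ∈ range (2*m+1), (Polynomial.X:S)^i) * (Polynomial.X - 1)) := by rw [hg]
          _ = _ := by ring
      rw [hz]; ring
    rw [Finset.sum_congr rfl hWt, hBz, ← Finset.mul_sum, hW']
    ring
  have hDeval : ((q:ℤ⟦X⟧)^(N+1)) ∣ (A * Bz' - W').eval 1 :=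
    dvd_eval_one _ _ (descent _ _ Y hfact)
  set P1 : ℤ⟦X⟧ := ∏ i ∈ range n, (1 - (q:ℤ⟦X⟧)^(i+1)) with hP1
  set P1m : ℤ⟦X⟧ := ∏ j ∈ range (2*N+1), (1 - (q:ℤ⟦X⟧)^(j+1)) with hP1m
  set Sig2 : ℤ⟦X⟧ := ∑ m ∈ range n, (-1)^m * (2*(m:ℤ⟦X⟧)+1) * (q:ℤ⟦X⟧)^(Tn (m+1)) with hSig2
  have hevalA : A.eval 1 = ∏ i ∈ range n, ((q:ℤ⟦X⟧)^(i+1) - 1) := by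
    rw [hA, Polynomial.eval_prod]
    exact Finset.prod_congr rfl fun i _ => by simp
  have hevalB : Bz'.eval 1 = P1m := by
    rw [hBz', Polynomial.eval_prod, hP1m]
    exact Finset.prod_congr rfl fun j _ => by simp
  have hevalW : W'.eval 1 = B (2*n) n *
      ∑ m ∈ range n, (-1)^(n+m) * (q:ℤ⟦X⟧)^(Tn (m+1)) * (2*(m:ℤ⟦X⟧)+1) := by
    rw [hW', Polynomial.eval_mul, Polynomial.eval_C, Polynomial.eval_finset_sum]
    congr 1
    refine Finset.sum_congr rfl fun m _ => ?_
    simp [Polynomial.eval_finset_sum]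
  have hsign : ∏ i ∈ range n, ((q:ℤ⟦X⟧)^(i+1) - 1) = (-1)^n * P1 := by
    have hterm : ∀ i ∈ range n, ((q:ℤ⟦X⟧)^(i+1) - 1) = (-1) * (1 - q^(i+1)) :=
      fun i _ => by ring
    rw [hP1, Finset.prod_congr rfl hterm, Finset.prod_mul_distrib, Finset.prod_const,
      Finset.card_range]
  have hnn : ((-1:ℤ⟦X⟧))^n * (-1)^n = 1 := by
    rw [← pow_add, show n+n = 2*n from by omega, pow_mul]; norm_num
  have h2 : (-1:ℤ⟦X⟧)^n * ((A * Bz' - W').eval 1) = P1 * P1m - B (2*n) n * Sig2 := by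
    rw [Polynomial.eval_sub, Polynomial.eval_mul, hevalA, hevalB, hevalW, hsign]
    have hSig : (∑ m ∈ range n, (-1:ℤ⟦X⟧)^(n+m) * (q:ℤ⟦X⟧)^(Tn (m+1)) * (2*(m:ℤ⟦X⟧)+1))
        = (-1)^n * Sig2 := by
      rw [hSig2, Finset.mul_sum]
      exact Finset.sum_congr rfl fun m _ => by rw [pow_add]; ring
    rw [hSig]
    linear_combination (P1 * P1m - B (2*n) n * Sig2) * hnn
  have hteles := B_teles (2*n) n (by omega)
  have hd2 : ((q:ℤ⟦X⟧)^(N+1)) ∣ P1 * (P1 * P1m - B (2*n) n * Sig2) := by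
    rw [← h2]
    exact Dvd.dvd.mul_left (Dvd.dvd.mul_left hDeval _) _
  have hd1 : ((q:ℤ⟦X⟧)^(N+1)) ∣ P1^3 - P1^2 * P1m := by
    have hP : P1 = P1m * (1 - (q:ℤ⟦X⟧)^(2*N+2)) := by
      rw [hP1, hP1m, hn, show 2*N+2 = (2*N+1)+1 from rfl, Finset.prod_range_succ]
    have he : P1^3 - P1^2*P1m = -((P1^2 * P1m) * (q:ℤ⟦X⟧)^(2*N+2)) := by
      rw [hP]; ring
    rw [he]
    exact dvd_neg.mpr (Dvd.dvd.mul_left (pow_dvd_pow _ (by omega)) _)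
  have hd3 : ((q:ℤ⟦X⟧)^(N+1)) ∣ (P1 * B (2*n) n - 1) * Sig2 := by
    rw [hteles]
    have := one_sub_prod_dvd (N+1) n (fun k => 2*n - k)
      (fun k hk => by simp only [hn] at hk ⊢; omega)
    have h' : ((∏ k ∈ range n, (1 - (q:ℤ⟦X⟧)^(2*n - k))) - 1) * Sig2
        = -((1 - ∏ k ∈ range n, (1 - (q:ℤ⟦X⟧)^(2*n - k))) * Sig2) := by ring
    rw [h']
    exact dvd_neg.mpr (this.mul_right _)
  have key : P1^3 - Sig2 = (P1^3 - P1^2*P1m) + P1*((P1*P1m) - B (2*n) n * Sig2)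
      + (P1 * B (2*n) n - 1) * Sig2 := by ring
  rw [key]
  exact dvd_add (dvd_add hd1 hd2) hd3



end JacobiAux2

/-- Jacobi's identity `(∏_{i≥1}(1-q^i))³ = ∑_{m≥0} (-1)^m (2m+1) q^{m(m+1)/2}`,
stated coefficientwise in `ℤ⟦q⟧`: the `N`-th coefficient of the cube of the Euler product
(which only depends on factors with `i ≤ N+1`) equals the `N`-th coefficient of the partial
sum over `m ≤ N` (exponents `m(m+1)/2 > N` do not contribute). -/
theorem jacobi_cube (N : ℕ) :
    PowerSeries.coeff (R := ℤ) N
        ((∏ i ∈ Finset.range (N + 1), (1 - (PowerSeries.X : ℤ⟦X⟧) ^ (i + 1))) ^ 3) =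
      PowerSeries.coeff (R := ℤ) N
        (∑ m ∈ Finset.range (N + 1),
          (-1 : ℤ⟦X⟧) ^ m * (2 * m + 1 : ℤ⟦X⟧) * (PowerSeries.X : ℤ⟦X⟧) ^ (m * (m + 1) / 2)) := by
  simp only [Tn_eq_div]
  set Pg : ℤ⟦X⟧ := ∏ i ∈ range (N+1), (1 - (PowerSeries.X : ℤ⟦X⟧)^(i+1)) with hPg
  set Sg : ℤ⟦X⟧ := ∑ m ∈ range (N+1),
      (-1 : ℤ⟦X⟧)^m * (2 * m + 1 : ℤ⟦X⟧) * (PowerSeries.X : ℤ⟦X⟧)^(Tn (m+1)) with hSg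
  have hmod := euler_cube_mod N
  -- truncate the product
  set R : ℤ⟦X⟧ := ∏ i ∈ range (N+1), (1 - (PowerSeries.X : ℤ⟦X⟧)^((N+1)+i+1)) with hR
  have hPn : (∏ i ∈ range (2*N+2), (1 - (PowerSeries.X : ℤ⟦X⟧)^(i+1))) = Pg * R := by
    rw [show 2*N+2 = (N+1)+(N+1) from by omega, Finset.prod_range_add]
  have hRd : ((PowerSeries.X : ℤ⟦X⟧)^(N+1)) ∣ 1 - R :=
    one_sub_prod_dvd (N+1) (N+1) (fun i => (N+1)+i+1) (fun k hk => by show N+1 ≤ (N+1)+k+1; omega)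
  have hprod : ((PowerSeries.X : ℤ⟦X⟧)^(N+1)) ∣
      Pg^3 - (∏ i ∈ range (2*N+2), (1 - (PowerSeries.X : ℤ⟦X⟧)^(i+1)))^3 := by
    rw [hPn, show Pg^3 - (Pg*R)^3 = (1 - R) * (Pg^3 * (R^2 + R + 1)) from by ring]
    exact hRd.mul_right _
  -- truncate the sum
  have hsum : ((PowerSeries.X : ℤ⟦X⟧)^(N+1)) ∣
      (∑ m ∈ range (2*N+2),
        (-1 : ℤ⟦X⟧)^m * (2*(m:ℤ⟦X⟧)+1) * (PowerSeries.X : ℤ⟦X⟧)^(Tn (m+1))) - Sg := by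
    rw [show 2*N+2 = (N+1)+(N+1) from by omega, Finset.sum_range_add, hSg,
      add_sub_cancel_left]
    refine Finset.dvd_sum fun i _ => ?_
    exact Dvd.dvd.mul_left
      (pow_dvd_pow _ (le_trans (by omega) (le_Tn_succ ((N+1)+i)))) _
  have hfinal : ((PowerSeries.X : ℤ⟦X⟧)^(N+1)) ∣ Pg^3 - Sg := by
    have := dvd_add (dvd_add hprod hmod) hsum
    simpa using this
  have hco := PowerSeries.X_pow_dvd_iff.mp hfinal N (by omega)
  rw [map_sub] at hco
  linarith [hco]
end

section
/- For coprime integers s,t ≥ 2, (1/2) ∑_{m=1}^{s-1} ∑_{n=1}^{t-1} [ ((ns - mt)² - (s-t)²)/(4st) - (1/24)(1 - 6(s-t)²/(st)) ] = (s-1)(t-1)(st - s - t - 1)/48. -/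
/-!
The summand is a quadratic polynomial in `m` and `n`, so the double sum is evaluated by the
power sums `∑ i = N(N+1)/2` and `∑ i² = N(N+1)(2N+1)/6`; what remains is a rational-function
identity in `s` and `t`.
-/

open Finset

section PowerSums

variable {K : Type*} [Field K] [CharZero K]

theorem sum_Icc_one_natCast (N : ℕ) : ∑ i ∈ Icc 1 N, (i : K) = N * (N + 1) / 2 := by
  induction N with
  | zero => simp
  | succ N ih =>
    rw [sum_Icc_succ_top (by omega), ih]
    push_cast
    ring

theorem sum_Icc_one_natCast_sq (N : ℕ) :
    ∑ i ∈ Icc 1 N, (i : K) ^ 2 = N * (N + 1) * (2 * N + 1) / 6 := by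
  induction N with
  | zero => simp
  | succ N ih =>
    rw [sum_Icc_succ_top (by omega), ih]
    push_cast
    ring

theorem sum_Icc_sum_Icc_natCast_mul_sub_sq (a b : K) (M N : ℕ) :
    ∑ m ∈ Icc 1 M, ∑ n ∈ Icc 1 N, ((n : K) * a - m * b) ^ 2 =
      M * N * ((N + 1) * (2 * N + 1) * a ^ 2 / 6 - (M + 1) * (N + 1) * a * b / 2 +
        (M + 1) * (2 * M + 1) * b ^ 2 / 6) := by
  have hexpand : ∀ m n : ℕ, ((n : K) * a - m * b) ^ 2 =
      a ^ 2 * (n : K) ^ 2 - 2 * a * b * m * n + b ^ 2 * (m : K) ^ 2 := fun _ _ => by ring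
  simp only [hexpand, sum_add_distrib, sum_sub_distrib, ← mul_sum, sum_const, Nat.card_Icc,
    nsmul_eq_mul, ← sum_mul, sum_Icc_one_natCast, sum_Icc_one_natCast_sq]
  push_cast
  ring

end PowerSums

theorem sum_normalized_weights_general_general (s t : ℕ) (hs : 2 ≤ s) (ht : 2 ≤ t) :
    (1 / 2 : ℚ) * ∑ m ∈ Finset.Icc 1 (s - 1), ∑ n ∈ Finset.Icc 1 (t - 1),
        ((((n : ℚ) * s - (m : ℚ) * t) ^ 2 - ((s : ℚ) - t) ^ 2) / (4 * s * t) -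
          (1 / 24) * (1 - 6 * ((s : ℚ) - t) ^ 2 / ((s : ℚ) * t))) =
      ((s : ℚ) - 1) * ((t : ℚ) - 1) * ((s : ℚ) * t - s - t - 1) / 48 := by
  obtain ⟨M, rfl⟩ : ∃ M, s = M + 1 := ⟨s - 1, by omega⟩
  obtain ⟨N, rfl⟩ : ∃ N, t = N + 1 := ⟨t - 1, by omega⟩
  simp only [sub_div, sum_sub_distrib, ← sum_div, sum_Icc_sum_Icc_natCast_mul_sub_sq, sum_const,
    Nat.card_Icc, nsmul_eq_mul, Nat.add_sub_cancel]
  push_cast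
  field_simp
  ring

/-- For coprime integers `s,t ≥ 2`,
`(1/2) ∑_{m=1}^{s-1} ∑_{n=1}^{t-1} (h_{s,t}^{m,n} - c_{s,t}/24)
  = (s-1)(t-1)(st - s - t - 1)/48`,
where `h_{s,t}^{m,n} = ((ns-mt)² - (s-t)²)/(4st)` and `c_{s,t} = 1 - 6(s-t)²/(st)`. -/
theorem sum_normalized_weights_general (s t : ℕ) (hs : 2 ≤ s) (ht : 2 ≤ t)
    (hst : Nat.Coprime s t) :
    (1 / 2 : ℚ) * ∑ m ∈ Finset.Icc 1 (s - 1), ∑ n ∈ Finset.Icc 1 (t - 1),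
        ((((n : ℚ) * s - (m : ℚ) * t) ^ 2 - ((s : ℚ) - t) ^ 2) / (4 * s * t) -
          (1 / 24) * (1 - 6 * ((s : ℚ) - t) ^ 2 / ((s : ℚ) * t))) =
      ((s : ℚ) - 1) * ((t : ℚ) - 1) * ((s : ℚ) * t - s - t - 1) / 48 :=
  sum_normalized_weights_general_general s t hs ht
end
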